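/- Consider the rhombus with vertices (−tan 36°, 0), (0, 1), (tan 36°, 0), (0, −1), i.e. the rhombus with half-diagonals tan 36° and 1, whose acute angle 2·arctan(tan 36°) = 72° is at the vertical vertices. Truncate it by a horizontal line at height h such that the resulting pentagon (left vertex, the two truncation points, right vertex, bottom vertex) is inscribed in a circle. Let A = (0,1) be the top vertex, C = (0,0) the center, and B = (0,h) the point where the truncation line meets the vertical diagonal. Then BC/AC = (3 − √5)/2. -/
import Mathlib


open Real

lemma tan_pi_div_five_sq : Real.tan (π / 5) ^ 2 = 5 - 2 * Real.sqrt 5 := by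
  have hs : Real.sqrt 5 ^ 2 = 5 := Real.sq_sqrt (by norm_num)
  have hs0 : (0:ℝ) ≤ Real.sqrt 5 := Real.sqrt_nonneg 5
  have hc : Real.cos (π / 5) = (1 + Real.sqrt 5) / 4 := Real.cos_pi_div_five
  have hcne : Real.cos (π / 5) ≠ 0 := by rw [hc]; positivity
  have hsin : Real.sin (π / 5) ^ 2 = 1 - Real.cos (π / 5) ^ 2 := by
    have := Real.sin_sq_add_cos_sq (π / 5); linarith
  rw [Real.tan_eq_sin_div_cos, div_pow, hsin, hc]
  rw [div_eq_iff (by positivity)]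
  nlinarith [hs, hs0]

/-- Schreiber's 72° rhombus with vertices (±tan 36°, 0), (0, ±1), truncated by
the horizontal line y = h (0 < h < 1).  The resulting pentagon, with vertices
(-tan 36°, 0), (-(1-h)·tan 36°, h), ((1-h)·tan 36°, h), (tan 36°, 0), (0, -1),
is inscribed in a circle if and only if h = (3 - √5)/2, i.e. the central
truncation ratio BC/AC equals (3 - √5)/2. -/
theorem schreiber_inscribed_truncation (h : ℝ) (h0 : 0 < h) (h1 : h < 1) :
    (∃ cx cy r : ℝ,
      (-tan (36 * π / 180) - cx) ^ 2 + (0 - cy) ^ 2 = r ^ 2 ∧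
      (-((1 - h) * tan (36 * π / 180)) - cx) ^ 2 + (h - cy) ^ 2 = r ^ 2 ∧
      ((1 - h) * tan (36 * π / 180) - cx) ^ 2 + (h - cy) ^ 2 = r ^ 2 ∧
      (tan (36 * π / 180) - cx) ^ 2 + (0 - cy) ^ 2 = r ^ 2 ∧
      (0 - cx) ^ 2 + (-1 - cy) ^ 2 = r ^ 2) ↔
    h = (3 - Real.sqrt 5) / 2 := by
  have hang : 36 * π / 180 = π / 5 := by ring
  rw [hang]
  have hs : Real.sqrt 5 ^ 2 = 5 := Real.sq_sqrt (by norm_num)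
  have hs0 : (0:ℝ) ≤ Real.sqrt 5 := Real.sqrt_nonneg 5
  have hs2 : Real.sqrt 5 < 5/2 := by nlinarith
  set t := Real.tan (π / 5) with ht
  have ht2 : t ^ 2 = 5 - 2 * Real.sqrt 5 := tan_pi_div_five_sq
  have htpos : 0 < t ^ 2 := by rw [ht2]; nlinarith
  constructor
  · rintro ⟨cx, cy, r, e1, e2, e3, e4, e5⟩
    -- cx = 0
    have hcx : cx = 0 := by
      have h4 : 4 * t * cx = 0 := by linear_combination e1 - e4
      have htne : t ≠ 0 := by intro h'; rw [h'] at htpos; simp at htpos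
      have : t * cx = 0 := by linarith
      rcases mul_eq_zero.mp this with h' | h'
      · exact absurd h' htne
      · exact h'
    subst hcx
    have hcy : 2 * cy = t ^ 2 - 1 := by linear_combination e5 - e1
    have key : h * (t ^ 2 * (3 - h) - (h + 1)) = 0 := by
      linear_combination e1 - e3 - h * hcy
    have key2 : t ^ 2 * (3 - h) = h + 1 := by
      rcases mul_eq_zero.mp key with h' | h'
      · exact absurd h' (ne_of_gt h0)
      · linarith
    rw [ht2] at key2
    have hden : (0:ℝ) < 6 - 2 * Real.sqrt 5 := by nlinarith
    have hfin : (6 - 2 * Real.sqrt 5) * (h - (3 - Real.sqrt 5) / 2) = 0 := by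
      linear_combination (-1 : ℝ) * key2 - hs
    rcases mul_eq_zero.mp hfin with h' | h'
    · exact absurd h' (ne_of_gt hden)
    · linarith
  · intro hh
    subst hh
    refine ⟨0, 2 - Real.sqrt 5, Real.sqrt (t ^ 2 + (2 - Real.sqrt 5) ^ 2), ?_, ?_, ?_, ?_, ?_⟩ <;>
      rw [Real.sq_sqrt (by positivity)]
    · ring
    · linear_combination ((Real.sqrt 5 ^ 2 - 2 * Real.sqrt 5 - 3) / 4) * ht2
        - ((Real.sqrt 5 - 3) / 2) * hs
    · linear_combination ((Real.sqrt 5 ^ 2 - 2 * Real.sqrt 5 - 3) / 4) * ht2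
        - ((Real.sqrt 5 - 3) / 2) * hs
    · ring
    · linear_combination (-1 : ℝ) * ht2
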